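/- arXiv:2104.01665 — 3 statements merged into one kernel-verified Lean document; each statement's English description precedes it below -/
import Mathlib

section
/- For every integer m ≥ 1 and every primitive (2m+1)-th root of unity ζ, we have ∏_{j=1}^{m} (x^2 + 2x - 1 + ζ^j + ζ̄^j) = T_{2m+1}(z)/z, where z = (x+1)/2 and T_n is the Chebyshev polynomial of the first kind. -/
open Polynomial Complex

/-! Write `x + 1 = w + w'` with `w * w' = 1` and let `n = 2m + 1`. Then `T_n((x + 1)/2) = (wⁿ + w'ⁿ)/2`,
and since `conj (ζʲ) = ζ^(n - j)`, the `j`-th factor equals `w'² (w² + ζʲ)(w² + ζ^(n - j))`.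
As `j` runs over `1, …, m` the pairs `{j, n - j}` together with `0` exhaust the residues mod `n`, so
`(w² + 1) ∏ⱼ (w² + ζʲ)(w² + ζ^(n - j)) = ∏ᵢ (w² + ζⁱ) = w²ⁿ + 1`, `n` being odd.
It remains to note `x + 1 = w' (w² + 1)`. -/

theorem Polynomial.Chebyshev.T_eval_half_add_of_mul_eq_one {K : Type*} [Field K]
    (h2 : (2 : K) ≠ 0) {x y : K} (h : x * y = 1) (n : ℕ) :
    (T K n).eval ((x + y) / 2) = (x ^ n + y ^ n) / 2 := by
  let := invertibleOfNonzero h2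
  rw [chebyshev_T_eq_dickson_one_one, eval_mul, eval_C, eval_comp, eval_mul, eval_X,
    eval_ofNat, mul_div_cancel₀ _ h2, dickson_one_one_eval_add_inv x y h, invOf_eq_inv,
    inv_mul_eq_div]

theorem IsPrimitiveRoot.prod_range_add_pow_eq_of_odd {R : Type*} [CommRing R] [IsDomain R]
    {ζ : R} {n : ℕ} (hζ : IsPrimitiveRoot ζ n) (hn : Odd n) (y : R) :
    ∏ i ∈ Finset.range n, (y + ζ ^ i) = y ^ n + 1 := by
  have h := congrArg (eval y) (X_pow_sub_C_eq_prod hζ hn.pos hn.neg_one_pow)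
  simpa [eval_prod, mul_neg, sub_neg_eq_add] using h.symm

theorem Finset.prod_range_two_mul_add_one_eq_mul_prod_Icc {M : Type*} [CommMonoid M]
    (g : ℕ → M) (m : ℕ) :
    ∏ i ∈ range (2 * m + 1), g i = g 0 * ∏ j ∈ Icc 1 m, (g j * g (2 * m + 1 - j)) := by
  rw [prod_range_eq_mul_Ico g (Nat.succ_pos _), prod_mul_distrib, ← Ico_add_one_right_eq_Icc,
    prod_Ico_reflect g 1 (by omega), ← prod_Ico_consecutive g (n := m + 1) (by omega) (by omega)]
  congr 4
  omega

theorem Complex.conj_pow_eq_pow_sub {ζ : ℂ} {n j : ℕ} (hζ : ζ ^ n = 1) (hj : j ≤ n) :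
    starRingEnd ℂ (ζ ^ j) = ζ ^ (n - j) := by
  obtain rfl | hn := eq_or_ne n 0
  · simp [Nat.le_zero.mp hj]
  have hζ0 : ζ ≠ 0 := by rintro rfl; simp [hn] at hζ
  rw [map_pow, ← inv_eq_conj (norm_eq_one_of_pow_eq_one hζ hn), inv_pow, eq_comm,
    ← mul_eq_one_iff_eq_inv₀ (pow_ne_zero _ hζ0), ← pow_add, Nat.sub_add_cancel hj, hζ]

theorem IsAlgClosed.exists_mul_eq_one_and_add_eq {K : Type*} [Field K] [IsAlgClosed K] (c : K) :
    ∃ w w' : K, w * w' = 1 ∧ w + w' = c := by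
  obtain ⟨w, hw⟩ := IsAlgClosed.exists_root (C 1 * X ^ 2 + C (-c) * X + C 1)
    (by rw [degree_quadratic one_ne_zero]; decide)
  refine ⟨w, c - w, ?_, by ring⟩
  simp only [IsRoot, eval_add, eval_mul, eval_C, eval_pow, eval_X] at hw
  linear_combination -hw

theorem sq_add_two_mul_sub_one_add_add_eq_of_mul_eq_one {R : Type*} [CommRing R]
    {x w w' u v : R} (hw : w * w' = 1) (huv : u * v = 1) (hx : w + w' = x + 1) :
    x ^ 2 + 2 * x - 1 + u + v = w' ^ 2 * ((w ^ 2 + u) * (w ^ 2 + v)) := by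
  obtain rfl : x = w + w' - 1 := eq_sub_of_add_eq hx.symm
  linear_combination (2 - (1 + w * w') * (w ^ 2 + u + v)) * hw - w' ^ 2 * huv

theorem prod_quadratics_eq_chebyshev_T_general (m : ℕ) (ζ : ℂ)
    (hζ : IsPrimitiveRoot ζ (2 * m + 1)) (x : ℂ) :
    ((x + 1) / 2) * ∏ j ∈ Finset.Icc 1 m,
        (x ^ 2 + 2 * x - 1 + ζ ^ j + (starRingEnd ℂ) (ζ ^ j)) =
      (Polynomial.Chebyshev.T ℂ (2 * m + 1)).eval ((x + 1) / 2) := by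
  obtain ⟨w, w', hww', hsum⟩ := IsAlgClosed.exists_mul_eq_one_and_add_eq (x + 1)
  have hfactor : ∀ j ∈ Finset.Icc 1 m, x ^ 2 + 2 * x - 1 + ζ ^ j + starRingEnd ℂ (ζ ^ j) =
      w' ^ 2 * ((w ^ 2 + ζ ^ j) * (w ^ 2 + ζ ^ (2 * m + 1 - j))) := by
    intro j hj
    have hjn : j ≤ 2 * m + 1 := by grind
    rw [conj_pow_eq_pow_sub hζ.pow_eq_one hjn]
    refine sq_add_two_mul_sub_one_add_add_eq_of_mul_eq_one hww' ?_ hsum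
    rw [← pow_add, Nat.add_sub_cancel' hjn, hζ.pow_eq_one]
  set Q := ∏ j ∈ Finset.Icc 1 m, ((w ^ 2 + ζ ^ j) * (w ^ 2 + ζ ^ (2 * m + 1 - j)))
  have hpairs : (w ^ 2 + 1) * Q = (w ^ 2) ^ (2 * m + 1) + 1 := by
    rw [← hζ.prod_range_add_pow_eq_of_odd (odd_two_mul_add_one m),
      Finset.prod_range_two_mul_add_one_eq_mul_prod_Icc, pow_zero]
  have hpow : (w * w') ^ (2 * m + 1) = 1 := by rw [hww', one_pow]
  have hcast : (2 * m + 1 : ℤ) = ((2 * m + 1 : ℕ) : ℤ) := by push_cast; ring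
  rw [Finset.prod_congr rfl hfactor, Finset.prod_mul_distrib, Finset.prod_const, Nat.card_Icc,
    Nat.add_sub_cancel, ← hsum, hcast, Chebyshev.T_eval_half_add_of_mul_eq_one two_ne_zero hww']
  linear_combination (w' ^ (2 * m + 1) / 2) * hpairs - (w * (w' ^ 2) ^ m * Q / 2) * hww'
    + (w ^ (2 * m + 1) / 2) * hpow

theorem prod_quadratics_eq_chebyshev_T (m : ℕ) (hm : 1 ≤ m) (ζ : ℂ)
    (hζ : IsPrimitiveRoot ζ (2 * m + 1)) (x : ℂ) :
    ((x + 1) / 2) * ∏ j ∈ Finset.Icc 1 m,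
        (x ^ 2 + 2 * x - 1 + ζ ^ j + (starRingEnd ℂ) (ζ ^ j)) =
      (Polynomial.Chebyshev.T ℂ (2 * m + 1)).eval ((x + 1) / 2) :=
  prod_quadratics_eq_chebyshev_T_general m ζ hζ x
end

section
/- For every integer m ≥ 1 and every primitive (2m+1)-th root of unity ζ, we have ∑_{j=1}^{m} (2x + ζ^j + ζ̄^j)/(x^2 + 2x - 1 + ζ^j + ζ̄^j) = -1/(2z) + (2m+1)(T_{2m+1}(z) - (z-1)U_{2m}(z))/(2 T_{2m+1}(z)), where z = (x+1)/2. -/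
/-!
Put `z = (x + 1) / 2`. Since `ζ̄ = ζ⁻¹`, the `j`-th denominator is `q_j(z)` with
`q_j = 4X² - 2 + ζ^j + ζ^{-j}`, and the `j`-th summand is `1 + (1 - z)/2 · q_j'(z)/q_j(z)`.
The polynomials `q_j` factor `T_{2m+1} = X · ∏ q_j`: substituting `2z = w + w⁻¹` turns this into
`w^{2(2m+1)} + 1 = ∏_{i < 2m+1} (w² + ζ^i)`, with the factors for `i` and `2m+1-i` paired up.
Taking the logarithmic derivative and `T_n' = n U_{n-1}` gives `Σ q_j'(z)/q_j(z)` in terms of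
`U_{2m}(z)/T_{2m+1}(z)`.
-/

open Polynomial Complex Finset

namespace Polynomial.Chebyshev

theorem two_mul_T_eval_of_mul_eq_one {R : Type*} [CommRing R] {a b y : R} (hab : a * b = 1)
    (hy : 2 * y = a + b) (n : ℕ) : 2 * (T R n).eval y = a ^ n + b ^ n := by
  rw [← dickson_one_one_eval_add_inv a b hab, dickson_one_one_eq_chebyshev_C, ← hy]
  simpa [eval_comp] using congrArg (eval y) (C_comp_two_mul_X R n).symm

end Polynomial.Chebyshev

theorem Finset.prod_range_two_mul_add_one {M : Type*} [CommMonoid M] (f : ℕ → M) (m : ℕ) :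
    ∏ i ∈ range (2 * m + 1), f i = f 0 * ∏ j ∈ Icc 1 m, (f j * f (2 * m + 1 - j)) := by
  rw [prod_range_succ', two_mul, prod_range_add, mul_comm, ← Ico_add_one_right_eq_Icc,
    ← prod_Ico_add' _ 0 m 1, ← range_eq_Ico, prod_mul_distrib,
    ← prod_range_reflect (fun x => f (m + x + 1)) m]
  refine congrArg (fun p => f 0 * (_ * p)) (prod_congr rfl fun i hi => ?_)
  rw [mem_range] at hi
  congr 1
  omega

theorem Polynomial.eval_derivative_prod {ι K : Type*} [Field K] (s : Finset ι) (f : ι → K[X])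
    {z : K} (hf : ∀ i ∈ s, (f i).eval z ≠ 0) :
    (derivative (∏ i ∈ s, f i)).eval z =
      (∏ i ∈ s, f i).eval z * ∑ i ∈ s, (derivative (f i)).eval z / (f i).eval z := by
  classical
  rw [derivative_prod_finset, eval_finsetSum, mul_sum]
  refine sum_congr rfl fun i hi => ?_
  rw [eval_mul, eval_prod, eval_prod, ← mul_prod_erase s _ hi]
  field_simp [hf i hi]

theorem IsAlgClosed.exists_ne_zero_two_mul_eq_add_inv {K : Type*} [Field K] [IsAlgClosed K]
    (y : K) : ∃ w ≠ 0, 2 * y = w + w⁻¹ := by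
  obtain ⟨d, hd⟩ := IsAlgClosed.exists_eq_mul_self (y ^ 2 - 1)
  have hprod : (y + d) * (y - d) = 1 := by linear_combination hd
  refine ⟨y + d, left_ne_zero_of_mul_eq_one hprod, ?_⟩
  rw [inv_eq_of_mul_eq_one_right hprod]
  ring

namespace IsPrimitiveRoot

theorem prod_range_add_pow_eq {R : Type*} [CommRing R] [IsDomain R] {ζ : R} {n : ℕ}
    (hζ : IsPrimitiveRoot ζ n) (hn : Odd n) (v : R) :
    ∏ i ∈ range n, (v + ζ ^ i) = v ^ n + 1 := by
  simpa [eval_prod] using (congrArg (eval v) (X_pow_sub_C_eq_prod hζ hn.pos hn.neg_one_pow)).symm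

variable {K : Type*} [Field K] [IsAlgClosed K] [NeZero (2 : K)] {m : ℕ} {ζ : K}

theorem T_two_mul_add_one_eq_X_mul_prod (hζ : IsPrimitiveRoot ζ (2 * m + 1)) :
    Chebyshev.T K (2 * m + 1) = X * ∏ j ∈ Icc 1 m, (4 * X ^ 2 - 2 + C (ζ ^ j + (ζ ^ j)⁻¹)) := by
  refine Polynomial.funext fun y => ?_
  obtain ⟨w, hw, hy⟩ := IsAlgClosed.exists_ne_zero_two_mul_eq_add_inv y
  have hζ0 : ζ ≠ 0 := hζ.ne_zero (by omega)
  have hpair : ∀ j ∈ Icc 1 m, (w ^ 2 + ζ ^ j) * (w ^ 2 + ζ ^ (2 * m + 1 - j)) =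
      w ^ 2 * (4 * y ^ 2 - 2 + (ζ ^ j + (ζ ^ j)⁻¹)) := by
    intro j hj
    rw [pow_sub₀ _ hζ0 (by grind), hζ.pow_eq_one, one_mul,
      show 4 * y ^ 2 = (2 * y) ^ 2 by ring, hy]
    field_simp
    ring
  have hroots := hζ.prod_range_add_pow_eq ⟨m, rfl⟩ (w ^ 2)
  rw [prod_range_two_mul_add_one, prod_congr rfl hpair, prod_mul_distrib, prod_const,
    Nat.card_Icc, pow_zero, add_tsub_cancel_right] at hroots
  have hT := Chebyshev.two_mul_T_eval_of_mul_eq_one (mul_inv_cancel₀ hw) hy (2 * m + 1)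
  push_cast at hT
  rw [inv_pow] at hT
  field_simp at hT hy
  refine mul_left_cancel₀ (mul_ne_zero two_ne_zero (pow_ne_zero (2 * m + 1) hw)) ?_
  simp only [eval_mul, eval_X, eval_prod, eval_add, eval_sub, eval_pow, eval_C, eval_ofNat]
  linear_combination
    hT - hroots - w ^ (2 * m) * (∏ j ∈ Icc 1 m, (4 * y ^ 2 - 2 + (ζ ^ j + (ζ ^ j)⁻¹))) * hy

theorem eval_T_two_mul_add_one (hζ : IsPrimitiveRoot ζ (2 * m + 1)) (z : K) :
    (Chebyshev.T K (2 * m + 1)).eval z =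
      z * ∏ j ∈ Icc 1 m, (4 * z ^ 2 - 2 + (ζ ^ j + (ζ ^ j)⁻¹)) := by
  simp [hζ.T_two_mul_add_one_eq_X_mul_prod, eval_prod]

theorem eval_T_ne_zero_iff (hζ : IsPrimitiveRoot ζ (2 * m + 1)) (z : K) :
    (Chebyshev.T K (2 * m + 1)).eval z ≠ 0 ↔
      z ≠ 0 ∧ ∀ j ∈ Icc 1 m, 4 * z ^ 2 - 2 + (ζ ^ j + (ζ ^ j)⁻¹) ≠ 0 := by
  rw [hζ.eval_T_two_mul_add_one, mul_ne_zero_iff, prod_ne_zero_iff]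

theorem mul_eval_U_div_eval_T (hζ : IsPrimitiveRoot ζ (2 * m + 1)) {z : K}
    (hT : (Chebyshev.T K (2 * m + 1)).eval z ≠ 0) :
    (2 * m + 1) * (Chebyshev.U K (2 * m)).eval z / (Chebyshev.T K (2 * m + 1)).eval z =
      z⁻¹ + ∑ j ∈ Icc 1 m, 8 * z / (4 * z ^ 2 - 2 + (ζ ^ j + (ζ ^ j)⁻¹)) := by
  set q : ℕ → K[X] := fun j => 4 * X ^ 2 - 2 + C (ζ ^ j + (ζ ^ j)⁻¹) with hq
  have hfac : Chebyshev.T K (2 * m + 1) = X * ∏ j ∈ Icc 1 m, q j :=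
    hζ.T_two_mul_add_one_eq_X_mul_prod
  have hqz : ∀ j, (q j).eval z = 4 * z ^ 2 - 2 + (ζ ^ j + (ζ ^ j)⁻¹) := by simp [hq]
  have hq'z : ∀ j, (derivative (q j)).eval z = 8 * z := by
    intro j
    rw [hq, derivative_add, derivative_C]
    simp only [derivative_sub, derivative_mul, derivative_ofNat, zero_mul, derivative_X_pow_succ,
      Nat.cast_one, map_add, map_one, pow_one, zero_add, sub_zero, add_zero, eval_mul, eval_ofNat,
      eval_add, eval_one, eval_X]
    ring
  obtain ⟨hz, hq0⟩ := (hζ.eval_T_ne_zero_iff z).1 hT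
  have hqz0 : ∀ j ∈ Icc 1 m, (q j).eval z ≠ 0 := fun j hj => (hqz j).symm ▸ hq0 j hj
  have hPz : (∏ j ∈ Icc 1 m, q j).eval z ≠ 0 := by
    rw [eval_prod]
    exact prod_ne_zero_iff.2 hqz0
  have hU : (2 * m + 1) * (Chebyshev.U K (2 * m)).eval z =
      (derivative (Chebyshev.T K (2 * m + 1))).eval z := by
    simp [Chebyshev.T_derivative_eq_U]
  rw [hU, hfac, derivative_mul, derivative_X, eval_add, eval_mul, eval_mul, eval_one, eval_X,
    one_mul, eval_derivative_prod _ _ hqz0]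
  simp only [hqz, hq'z, eval_mul, eval_X]
  field_simp

end IsPrimitiveRoot

theorem sum_rational_eq_chebyshev_general (m : ℕ) (ζ : ℂ)
    (hζ : IsPrimitiveRoot ζ (2 * m + 1)) (x : ℂ)
    (hT : (Polynomial.Chebyshev.T ℂ (2 * m + 1)).eval ((x + 1) / 2) ≠ 0) :
    ∑ j ∈ Finset.Icc 1 m,
        (2 * x + ζ ^ j + (starRingEnd ℂ) (ζ ^ j)) /
          (x ^ 2 + 2 * x - 1 + ζ ^ j + (starRingEnd ℂ) (ζ ^ j)) =
      -(1 / (2 * ((x + 1) / 2))) +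
        ((2 * m + 1) : ℂ) *
            ((Polynomial.Chebyshev.T ℂ (2 * m + 1)).eval ((x + 1) / 2) -
              (((x + 1) / 2) - 1) *
                (Polynomial.Chebyshev.U ℂ (2 * m)).eval ((x + 1) / 2)) /
          (2 * (Polynomial.Chebyshev.T ℂ (2 * m + 1)).eval ((x + 1) / 2)) := by
  set z := (x + 1) / 2 with hzx
  have hconj (j : ℕ) : (starRingEnd ℂ) (ζ ^ j) = (ζ ^ j)⁻¹ :=
    (inv_eq_conj (by rw [norm_pow, hζ.norm'_eq_one (by omega), one_pow])).symm
  have hden (j : ℕ) : x ^ 2 + 2 * x - 1 + ζ ^ j + (starRingEnd ℂ) (ζ ^ j) =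
      4 * z ^ 2 - 2 + (ζ ^ j + (ζ ^ j)⁻¹) := by
    rw [hconj, hzx]
    ring
  obtain ⟨hz, hden0⟩ := (hζ.eval_T_ne_zero_iff z).1 hT
  have hterm : ∀ j ∈ Icc 1 m, (2 * x + ζ ^ j + (starRingEnd ℂ) (ζ ^ j)) /
      (x ^ 2 + 2 * x - 1 + ζ ^ j + (starRingEnd ℂ) (ζ ^ j)) =
      1 + (1 - z) / 2 * (8 * z / (4 * z ^ 2 - 2 + (ζ ^ j + (ζ ^ j)⁻¹))) := by
    intro j hj
    rw [hden, hconj, div_eq_iff (hden0 j hj), add_mul, one_mul, mul_assoc,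
      div_mul_cancel₀ _ (hden0 j hj), hzx]
    ring
  rw [sum_congr rfl hterm, sum_add_distrib, ← mul_sum,
    eq_sub_of_add_eq' (hζ.mul_eval_U_div_eval_T hT).symm]
  simp only [sum_const, Nat.card_Icc, add_tsub_cancel_right, nsmul_eq_mul, mul_one]
  field_simp
  ring

theorem sum_rational_eq_chebyshev (m : ℕ) (hm : 1 ≤ m) (ζ : ℂ)
    (hζ : IsPrimitiveRoot ζ (2 * m + 1)) (x : ℂ)
    (hden : ∀ j ∈ Finset.Icc 1 m,
      x ^ 2 + 2 * x - 1 + ζ ^ j + (starRingEnd ℂ) (ζ ^ j) ≠ 0)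
    (hz : (x + 1) / 2 ≠ 0)
    (hT : (Polynomial.Chebyshev.T ℂ (2 * m + 1)).eval ((x + 1) / 2) ≠ 0) :
    ∑ j ∈ Finset.Icc 1 m,
        (2 * x + ζ ^ j + (starRingEnd ℂ) (ζ ^ j)) /
          (x ^ 2 + 2 * x - 1 + ζ ^ j + (starRingEnd ℂ) (ζ ^ j)) =
      -(1 / (2 * ((x + 1) / 2))) +
        ((2 * m + 1) : ℂ) *
            ((Polynomial.Chebyshev.T ℂ (2 * m + 1)).eval ((x + 1) / 2) -
              (((x + 1) / 2) - 1) *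
                (Polynomial.Chebyshev.U ℂ (2 * m)).eval ((x + 1) / 2)) /
          (2 * (Polynomial.Chebyshev.T ℂ (2 * m + 1)).eval ((x + 1) / 2)) :=
  sum_rational_eq_chebyshev_general m ζ hζ x hT
end

section
/- For every integer m ≥ 1, the rational function identity (2m+1)U_{2m}(z)/T_{2m+1}(z) - 1/z = 2z ∑_{j=1}^{m} 1/(z^2 - sin^2(πj/(2m+1))) holds. -/
open Polynomial Real

/-! The polynomial `T_{2m+1}` has degree `2m+1`, leading coefficient `4^m`, and vanishes at the
`2m+1` distinct points `sin (π i / (2m+1))`, `|i| ≤ m` (they are `cos` of odd multiples of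
`π / (2 (2m+1))`). Hence `T_{2m+1} = 4^m X ∏_{j=1}^m (X² - sin² (π j / (2m+1)))`. Since
`T_n' = n U_{n-1}`, the left-hand side is the logarithmic derivative of `T_{2m+1}` minus `1/z`,
and the factorization splits that logarithmic derivative into the sum. -/

namespace Polynomial

variable {R ι : Type*} [CommRing R]

theorem monic_X_mul_prod_X_sq_sub_C (s : Finset ι) (a : ι → R) :
    (X * ∏ i ∈ s, (X ^ 2 - C (a i))).Monic :=
  monic_X.mul (monic_prod_of_monic _ _ fun _ _ ↦ monic_X_pow_sub_C _ two_ne_zero)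

theorem natDegree_X_mul_prod_X_sq_sub_C [Nontrivial R] (s : Finset ι) (a : ι → R) :
    (X * ∏ i ∈ s, (X ^ 2 - C (a i))).natDegree = 2 * s.card + 1 := by
  rw [monic_X.natDegree_mul (monic_prod_of_monic _ _ fun _ _ ↦ monic_X_pow_sub_C _ two_ne_zero),
    natDegree_prod_of_monic _ _ fun _ _ ↦ monic_X_pow_sub_C _ two_ne_zero]
  simp
  ring

end Polynomial

theorem injOn_sin_pi_mul_int_div_two_mul_add_one (m : ℕ) :
    Set.InjOn (fun i : ℤ ↦ sin (π * i / (2 * m + 1))) (Finset.Icc (-m : ℤ) m) := by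
  refine injOn_sin.comp (fun i _ j _ h ↦ ?_) (fun i hi ↦ ?_)
  · have : (i : ℝ) = j := by field_simp at h; simpa [pi_ne_zero] using h
    exact_mod_cast this
  · simp only [Finset.coe_Icc, Set.mem_Icc] at hi
    have hi₁ : (-m : ℝ) ≤ i := by exact_mod_cast hi.1
    have hi₂ : (i : ℝ) ≤ m := by exact_mod_cast hi.2
    constructor
    · rw [le_div_iff₀ (by positivity)]; nlinarith [pi_pos]
    · rw [div_le_iff₀ (by positivity)]; nlinarith [pi_pos]

theorem eval_X_mul_prod_X_sq_sub_sin_sq (m : ℕ) {i : ℤ} (hi : i ∈ Finset.Icc (-m : ℤ) m) :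
    (X * ∏ j ∈ Finset.Icc 1 m, (X ^ 2 - C (sin (π * j / (2 * m + 1)) ^ 2))).eval
      (sin (π * i / (2 * m + 1))) = 0 := by
  rcases eq_or_ne i 0 with rfl | hi₀
  · simp
  have hmem : i.natAbs ∈ Finset.Icc 1 m := by
    simp only [Finset.mem_Icc] at hi ⊢
    omega
  rw [eval_mul, eval_prod]
  refine mul_eq_zero_of_right _ (Finset.prod_eq_zero hmem ?_)
  rw [eval_sub, eval_pow, eval_X, eval_C, Nat.cast_natAbs, Int.cast_abs, sub_eq_zero]
  rcases abs_cases (i : ℝ) with ⟨h, -⟩ | ⟨h, -⟩ <;> rw [h]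
  rw [mul_neg, neg_div, sin_neg, neg_sq]

theorem logDeriv_sq_sub_const {𝕜 : Type*} [NontriviallyNormedField 𝕜] (c x : 𝕜) :
    logDeriv (fun y ↦ y ^ 2 - c) x = 2 * x / (x ^ 2 - c) := by
  simp [logDeriv_apply]

namespace Polynomial.Chebyshev

theorem eval_T_real_sin_pi_mul_int_div (m : ℕ) (i : ℤ) :
    (T ℝ (2 * m + 1)).eval (sin (π * i / (2 * m + 1))) = 0 := by
  rw [← cos_pi_div_two_sub, T_real_cos, cos_eq_zero_iff]
  refine ⟨m - i, ?_⟩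
  push_cast
  field_simp
  ring

theorem T_real_two_mul_add_one_eq (m : ℕ) :
    T ℝ (2 * m + 1) = Polynomial.C (4 ^ m) *
      (X * ∏ j ∈ Finset.Icc 1 m, (X ^ 2 - Polynomial.C (sin (π * j / (2 * m + 1)) ^ 2))) := by
  set P := X * ∏ j ∈ Finset.Icc 1 m, (X ^ 2 - Polynomial.C (sin (π * j / (2 * m + 1)) ^ 2))
  have hP : P.Monic := monic_X_mul_prod_X_sq_sub_C _ _
  have hnatAbs : (2 * m + 1 : ℤ).natAbs = 2 * m + 1 := by omega
  have hdegT : (T ℝ (2 * m + 1)).degree = ↑(2 * m + 1) := by rw [degree_T, hnatAbs]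
  have hdegP : (Polynomial.C (4 ^ m : ℝ) * P).degree = ↑(2 * m + 1) := by
    rw [degree_C_mul (by positivity), degree_eq_natDegree hP.ne_zero,
      natDegree_X_mul_prod_X_sq_sub_C, Nat.card_Icc, Nat.add_sub_cancel]
  have hlead : (T ℝ (2 * m + 1)).leadingCoeff = (Polynomial.C (4 ^ m : ℝ) * P).leadingCoeff := by
    rw [leadingCoeff_T, leadingCoeff_mul, leadingCoeff_C, hP.leadingCoeff, mul_one, hnatAbs,
      Nat.add_sub_cancel, pow_mul]
    norm_num
  refine eq_of_degree_sub_lt_of_eval_finset_eq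
    ((Finset.Icc (-m : ℤ) m).image fun i : ℤ ↦ sin (π * i / (2 * m + 1))) ?_ ?_
  · rw [Finset.card_image_of_injOn (injOn_sin_pi_mul_int_div_two_mul_add_one m), Int.card_Icc]
    refine (degree_sub_lt_left (hdegT.trans hdegP.symm) (T_ne_zero _ _) hlead).trans_eq ?_
    rw [hdegT, show (m + 1 - -m : ℤ).toNat = 2 * m + 1 by omega]
  · simp only [Finset.mem_image]
    rintro _ ⟨i, hi, rfl⟩
    rw [eval_T_real_sin_pi_mul_int_div, eval_mul, eval_X_mul_prod_X_sq_sub_sin_sq m hi, mul_zero]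

theorem deriv_eval_T_real (n : ℤ) (x : ℝ) :
    deriv (fun y ↦ (T ℝ n).eval y) x = n * (U ℝ (n - 1)).eval x := by
  simp [Polynomial.deriv, T_derivative_eq_U]

end Polynomial.Chebyshev

theorem chebyshev_log_derivative_identity_general (m : ℕ) (z : ℝ)
    (hz : z ≠ 0)
    (hden : ∀ j ∈ Finset.Icc 1 m,
      z ^ 2 - Real.sin (Real.pi * j / (2 * m + 1)) ^ 2 ≠ 0) :
    (2 * m + 1 : ℝ) * (Polynomial.Chebyshev.U ℝ (2 * m)).eval z /
        (Polynomial.Chebyshev.T ℝ (2 * m + 1)).eval z - 1 / z =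
      2 * z * ∑ j ∈ Finset.Icc 1 m,
        1 / (z ^ 2 - Real.sin (Real.pi * j / (2 * m + 1)) ^ 2) := by
  set factor : ℕ → ℝ → ℝ := fun j x ↦ x ^ 2 - sin (π * j / (2 * m + 1)) ^ 2
  have hderiv : (2 * m + 1 : ℝ) * (Chebyshev.U ℝ (2 * m)).eval z =
      deriv (fun x ↦ (Chebyshev.T ℝ (2 * m + 1)).eval x) z := by
    rw [Chebyshev.deriv_eval_T_real, add_sub_cancel_right]
    push_cast
    rfl
  have hfactor : (fun x ↦ (Chebyshev.T ℝ (2 * m + 1)).eval x) =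
      fun x ↦ 4 ^ m * (x * ∏ j ∈ Finset.Icc 1 m, factor j x) := by
    ext x
    simp [factor, Chebyshev.T_real_two_mul_add_one_eq, eval_prod]
  rw [hderiv, ← logDeriv_apply, hfactor, logDeriv_const_mul _ _ (by positivity),
    logDeriv_mul (f := fun x ↦ x) _ hz (Finset.prod_ne_zero_iff.2 hden) (by fun_prop)
      (by fun_prop),
    logDeriv_id', logDeriv_prod hden (by fun_prop), Finset.mul_sum, add_sub_cancel_left]
  simp only [factor, logDeriv_sq_sub_const, mul_one_div]

theorem chebyshev_log_derivative_identity (m : ℕ) (hm : 1 ≤ m) (z : ℝ)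
    (hz : z ≠ 0)
    (hT : (Polynomial.Chebyshev.T ℝ (2 * m + 1)).eval z ≠ 0)
    (hden : ∀ j ∈ Finset.Icc 1 m,
      z ^ 2 - Real.sin (Real.pi * j / (2 * m + 1)) ^ 2 ≠ 0) :
    (2 * m + 1 : ℝ) * (Polynomial.Chebyshev.U ℝ (2 * m)).eval z /
        (Polynomial.Chebyshev.T ℝ (2 * m + 1)).eval z - 1 / z =
      2 * z * ∑ j ∈ Finset.Icc 1 m,
        1 / (z ^ 2 - Real.sin (Real.pi * j / (2 * m + 1)) ^ 2) :=
  chebyshev_log_derivative_identity_general m z hz hden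
end
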